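/- Let G be a finite abelian group, k a positive integer, and x ∈ S(G). If ‖x‖_∞ = 1/k and ‖Vx‖_∞ = 1/k, then there exists a subset A ⊆ G with |A| = k such that x(g) = 1/k for all g ∈ A and x(g) = 0 for all g ∉ A (i.e. exactly k coordinates of x equal 1/k and all the others are zero). -/

import Mathlib

open Finset

/- The quadratic stochastic operator (convolution square) on a finite abelian group:
`(Vx)(h) = ∑_{f,g ∈ G, f+g=h} x(f)·x(g)`. -/
open Classical in
noncomputable def QSO {G : Type*} [AddCommGroup G] [Fintype G] (x : G → ℝ) : G → ℝ :=
  fun h => ∑ p ∈ Finset.univ.filter (fun p : G × G => p.1 + p.2 = h), x p.1 * x p.2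

/-!
Pick `h` with `(Vx)(h) = ‖Vx‖_∞ = 1/k`. Since `x ≤ 1/k` pointwise and `∑ x = 1`,
`(Vx)(h) = ∑_f x(f) x(h - f) ≤ (1/k) ∑_f x(f) = 1/k`, so equality forces `x(h - f) = 1/k`
whenever `x(f) > 0`. Applying this to `f` and then to `h - f` shows that every nonzero
coordinate equals `1/k`, and `∑ x = 1` then leaves exactly `k` of them.
-/

section Convolution

variable {G : Type*} [AddCommGroup G] [Fintype G]

theorem QSO_apply (x : G → ℝ) (h : G) : QSO x h = ∑ f, x f * x (h - f) := by
  classical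
  unfold QSO
  rw [sum_filter, Fintype.sum_prod_type]
  refine sum_congr rfl fun f _ => ?_
  simp_rw [← eq_sub_iff_add_eq']
  exact sum_ite_eq' univ (h - f) _ |>.trans (if_pos (mem_univ _))

theorem QSO_nonneg {x : G → ℝ} (hx : ∀ g, 0 ≤ x g) (h : G) : 0 ≤ QSO x h := by
  rw [QSO_apply]
  exact sum_nonneg fun f _ => mul_nonneg (hx f) (hx _)

theorem exists_QSO_apply_eq_norm {x : G → ℝ} (hx : ∀ g, 0 ≤ x g) : ∃ h, QSO x h = ‖QSO x‖ := by
  obtain ⟨⟨h, hh⟩, -⟩ := IsGreatest.pi_norm (QSO x)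
  exact ⟨h, (Real.norm_of_nonneg (QSO_nonneg hx h)).symm.trans hh⟩

variable {x : G → ℝ} {M : ℝ} {h : G}
  (hx_nonneg : ∀ g, 0 ≤ x g) (hx_sum : ∑ g, x g = 1) (hx_le : ∀ g, x g ≤ M)
include hx_nonneg hx_sum hx_le

theorem apply_sub_eq_of_QSO_apply_eq (hh : QSO x h = M) {f : G} (hf : 0 < x f) :
    x (h - f) = M := by
  have hterm_le : ∀ f ∈ univ, x f * x (h - f) ≤ x f * M :=
    fun f _ => mul_le_mul_of_nonneg_left (hx_le _) (hx_nonneg f)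
  have hsum_eq : ∑ f, x f * x (h - f) = ∑ f, x f * M := by
    rw [← QSO_apply, hh, ← sum_mul, hx_sum, one_mul]
  exact mul_left_cancel₀ hf.ne' ((sum_eq_sum_iff_of_le hterm_le).1 hsum_eq f (mem_univ f))

theorem eq_zero_or_eq_of_QSO_apply_eq (hM : 0 < M) (hh : QSO x h = M) (g : G) :
    x g = 0 ∨ x g = M := by
  refine (hx_nonneg g).eq_or_lt'.imp_right fun hg => ?_
  have hpartner := apply_sub_eq_of_QSO_apply_eq hx_nonneg hx_sum hx_le hh hg
  rw [← sub_sub_cancel h g]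
  exact apply_sub_eq_of_QSO_apply_eq hx_nonneg hx_sum hx_le hh (hpartner ▸ hM)

end Convolution

theorem card_filter_eq_of_sum_eq_one {ι : Type*} [Fintype ι] {x : ι → ℝ} {k : ℕ} (hk : k ≠ 0)
    (hx : ∀ i, x i = 0 ∨ x i = 1 / k) (hsum : ∑ i, x i = 1) : #{i | x i = 1 / k} = k := by
  have hsum_filter : ∑ i with x i = 1 / k, x i = ∑ i, x i :=
    sum_filter_of_ne fun i _ hi => (hx i).resolve_left hi
  rw [hsum, sum_congr rfl fun i hi => (mem_filter.1 hi).2, sum_const, nsmul_eq_mul,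
    mul_one_div, div_eq_one_iff_eq (Nat.cast_ne_zero.2 hk)] at hsum_filter
  exact_mod_cast hsum_filter

/-- If `x ∈ S(G)` has `‖x‖_∞ = 1/k` and `‖Vx‖_∞ = 1/k`, then exactly `k` coordinates
of `x` equal `1/k` and all the others are zero. -/
theorem extremal_norm_implies_uniform_support {G : Type*} [AddCommGroup G] [Fintype G]
    (k : ℕ) (hk : 0 < k) (x : G → ℝ)
    (hx_nonneg : ∀ g, 0 ≤ x g) (hx_sum : ∑ g, x g = 1)
    (hx_norm : ‖x‖ = 1 / (k : ℝ)) (hVx_norm : ‖QSO x‖ = 1 / (k : ℝ)) :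
    ∃ A : Finset G, A.card = k ∧
      (∀ g ∈ A, x g = 1 / (k : ℝ)) ∧ (∀ g ∉ A, x g = 0) := by
  have hx_le : ∀ g, x g ≤ 1 / k := fun g =>
    hx_norm ▸ (le_abs_self _).trans (norm_le_pi_norm x g)
  obtain ⟨h, hh⟩ := exists_QSO_apply_eq_norm hx_nonneg
  have hvalues := eq_zero_or_eq_of_QSO_apply_eq hx_nonneg hx_sum hx_le (by positivity)
    (hh.trans hVx_norm)
  refine ⟨({g | x g = 1 / k} : Finset G), card_filter_eq_of_sum_eq_one hk.ne' hvalues hx_sum,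
    fun g hg => (mem_filter.1 hg).2, fun g hg => (hvalues g).resolve_right ?_⟩
  simpa using hg
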